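/- Let A be a unital C*-algebra, let c ≥ 0 be a real number, and let x ∈ A satisfy the commutation relation x x* − x* x = c • 1. Then for every real constant K, the element f' = K • sin(x + x*) (defined via continuous functional calculus, noting x + x* is self-adjoint) satisfies the sector bound (f')* f' ≤ (4K²) • (x x*). In particular, the sector bound condition f'* f' ≤ (1/γ²) x x* + δ₁ holds with γ = 1/(2|K|) and δ₁ = 0. -/
import Mathlib


/-- In a unital C*-algebra, if `x x* − x* x = c • 1` with `c ≥ 0`, then
for any real `K`, the element `f' = K • sin(x + x*)` (via the continuous functional
calculus, as `x + x*` is self-adjoint) satisfies the sector bound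
`f'* f' ≤ (4K²) • (x x*)`. -/
theorem sector_bound_sin
    {A : Type*} [CStarAlgebra A] [PartialOrder A] [StarOrderedRing A]
    (c : ℝ) (hc : 0 ≤ c) (x : A) (hx : x * star x - star x * x = c • (1 : A))
    (K : ℝ) :
    star (K • cfc Real.sin (x + star x)) * (K • cfc Real.sin (x + star x))
      ≤ (4 * K ^ 2) • (x * star x) := by
  set a : A := x + star x with ha_def
  have ha : IsSelfAdjoint a := by
    rw [ha_def, IsSelfAdjoint, star_add, star_star, add_comm]
  have hs : IsSelfAdjoint (cfc Real.sin a) := cfc_predicate _ _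
  have hsin : (cfc Real.sin a) ^ 2 ≤ a ^ 2 := by
    calc (cfc Real.sin a) ^ 2 = cfc (fun t : ℝ => Real.sin t ^ 2) a := by
          rw [cfc_pow Real.sin 2 a]
      _ ≤ cfc (fun t : ℝ => t ^ 2) a := cfc_mono fun t _ => Real.sin_sq_le_sq
      _ = a ^ 2 := cfc_pow_id a 2
  have hxc : x * star x = star x * x + c • (1 : A) := by
    rw [← hx]; abel
  have h4 : a ^ 2 ≤ (4 : ℝ) • (x * star x) := by
    rw [← sub_nonneg]
    have h1 : 0 ≤ star (x - star x) * (x - star x) := star_mul_self_nonneg _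
    have h2 : 0 ≤ (2 * c) • (1 : A) := smul_nonneg (by linarith) zero_le_one
    have key : (4 : ℝ) • (x * star x) - a ^ 2
        = star (x - star x) * (x - star x) + (2 * c) • (1 : A) := by
      have h4s : (4 : ℝ) • (x * star x)
          = x * star x + x * star x + x * star x + x * star x := by
        rw [show (4:ℝ) = 1+1+1+1 by norm_num, add_smul, add_smul, add_smul, one_smul]
      have h2s : (2 * c) • (1 : A) = c • (1:A) + c • (1:A) := by
        rw [show (2:ℝ)*c = c + c by ring, add_smul]
      rw [h4s, h2s, ha_def]
      nth_rewrite 2 [hxc]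
      nth_rewrite 3 [hxc]
      simp only [star_sub, star_star]
      noncomm_ring
    rw [key]
    exact add_nonneg h1 h2
  calc star (K • cfc Real.sin a) * (K • cfc Real.sin a)
      = (K ^ 2) • ((cfc Real.sin a) ^ 2) := by
        rw [star_smul, hs.star_eq, smul_mul_smul_comm, star_trivial, ← sq, ← sq]
    _ ≤ (K ^ 2) • (a ^ 2) := smul_le_smul_of_nonneg_left hsin (sq_nonneg K)
    _ ≤ (K ^ 2) • ((4 : ℝ) • (x * star x)) :=
        smul_le_smul_of_nonneg_left h4 (sq_nonneg K)
    _ = (4 * K ^ 2) • (x * star x) := by rw [smul_smul]; ring_nf
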